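/- arXiv:1812.05019 — 5 statements merged into one kernel-verified Lean document; each statement's English description precedes it below -/
import Mathlib

section
/- Let 0 < a ≤ b. For every R ≥ 2b, ∫_ℝ (1/R)·φ_{a,R}(y)·φ_{b,R}(y) dy = 2ab − R^{−1}·( (1/2)·a·b² + (1/6)·a³ ). -/
open MeasureTheory Real intervalIntegral

/-- `φ_{a,R}(y) = (1/2) ∫_{-R}^R 1_{|x-y|≤a} dx`. -/
noncomputable def phi (a R y : ℝ) : ℝ :=
  (1/2) * ∫ x in (-R)..R, if |x - y| ≤ a then (1:ℝ) else 0

/-!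
For `0 ≤ R` the defining integral is the length of `[-R, R] ∩ [y - a, y + a]`, so for
`a ≤ R` the function `φ_{a,R}` is the even trapezoid equal to `a` on `|y| ≤ R - a` and falling
linearly to `0` on `R - a ≤ |y| ≤ R + a`. The product `φ_{a,R} φ_{b,R}` is therefore even and
supported in `[-(R + a), R + a]`, and on each of `[0, R - b]`, `[R - b, R - a]`, `[R - a, R + a]`
it is a product of two affine functions, whose integrals are elementary.
-/

section phi

variable {a R : ℝ}

lemma phi_eq_max (hR : 0 ≤ R) (y : ℝ) :
    phi a R y = max (min R (y + a) - max (-R) (y - a)) 0 / 2 := by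
  have hind : (fun x => if |x - y| ≤ a then (1 : ℝ) else 0)
      = (Set.Icc (y - a) (y + a)).indicator 1 := by
    ext x
    simp only [Set.indicator_apply, Set.mem_Icc, abs_sub_le_iff, Pi.one_apply]
    congr 1
    apply propext
    constructor <;> intro h <;> constructor <;> linarith [h.1, h.2]
  rw [phi, hind, integral_of_le (by linarith), ← integral_Icc_eq_integral_Ioc,
    setIntegral_indicator measurableSet_Icc, Set.Icc_inter_Icc]
  simp only [Pi.one_apply, MeasureTheory.integral_const, MeasurableSet.univ,
    measureReal_restrict_apply, Set.univ_inter, volume_real_Icc, smul_eq_mul, mul_one]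
  ring

lemma continuous_phi (hR : 0 ≤ R) : Continuous (phi a R) := by
  rw [funext (phi_eq_max hR)]
  fun_prop

lemma phi_neg (a R y : ℝ) : phi a R (-y) = phi a R y := by
  have h : ∀ x : ℝ, |x - -y| = |-x - y| := fun x => by rw [← abs_neg]; congr 1; ring
  simp only [phi, h]
  rw [integral_comp_neg (fun x => if |x - y| ≤ a then (1 : ℝ) else 0), neg_neg]

lemma phi_eq_zero (hR : 0 ≤ R) {y : ℝ} (hy : R + a ≤ |y|) : phi a R y = 0 := by
  rw [phi_eq_max hR, max_eq_right, zero_div]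
  rcases le_abs'.mp hy with hy | hy
  · linarith [min_le_right R (y + a), le_max_left (-R) (y - a)]
  · linarith [min_le_left R (y + a), le_max_right (-R) (y - a)]

lemma phi_eq_of_abs_le (ha : 0 ≤ a) {y : ℝ} (hy : |y| ≤ R - a) : phi a R y = a := by
  obtain ⟨hy₁, hy₂⟩ := abs_le.mp hy
  rw [phi_eq_max (by linarith), min_eq_right (by linarith : y + a ≤ R),
    max_eq_right (by linarith : -R ≤ y - a), max_eq_left (by linarith)]
  ring

lemma phi_eq_of_mem_Icc (ha : 0 ≤ a) (haR : a ≤ R) {y : ℝ}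
    (hy : y ∈ Set.Icc (R - a) (R + a)) : phi a R y = (R + a - y) / 2 := by
  obtain ⟨hy₁, hy₂⟩ := hy
  rw [phi_eq_max (by linarith), min_eq_left (by linarith : R ≤ y + a),
    max_eq_right (by linarith : -R ≤ y - a), max_eq_left (by linarith)]
  ring

end phi

lemma integral_eq_two_mul_intervalIntegral_of_even {f : ℝ → ℝ} {c : ℝ} (hc : 0 ≤ c)
    (hf : IntervalIntegrable f volume (-c) c) (heven : ∀ x, f (-x) = f x)
    (hsupp : ∀ x, c < |x| → f x = 0) :
    ∫ x, f x = 2 * ∫ x in 0..c, f x := by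
  have hout : ∀ x ∉ Set.Icc (-c) c, f x = 0 := fun x hx =>
    hsupp x (lt_of_not_ge fun h => hx (abs_le.mp h))
  have hleft : IntervalIntegrable f volume (-c) 0 :=
    hf.mono_set (Set.uIcc_subset_uIcc_left (by simp [Set.uIcc_of_le, hc]))
  have hright : IntervalIntegrable f volume 0 c :=
    hf.mono_set (Set.uIcc_subset_uIcc_right (by simp [Set.uIcc_of_le, hc]))
  have hsymm : ∫ x in (-c)..0, f x = ∫ x in 0..c, f x := by
    simpa [heven] using (integral_comp_neg (a := 0) (b := c) f).symm
  rw [← setIntegral_eq_integral_of_forall_compl_eq_zero hout, integral_Icc_eq_integral_Ioc,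
    ← integral_of_le (by linarith), ← integral_add_adjacent_intervals hleft hright, hsymm]
  ring

lemma integral_affine_mul_affine (p q r s l u : ℝ) :
    ∫ y in l..u, (p + q * y) * (r + s * y)
      = p * r * (u - l) + (p * s + q * r) * (u ^ 2 - l ^ 2) / 2 + q * s * (u ^ 3 - l ^ 3) / 3 := by
  have hexpand : ∀ y : ℝ,
      (p + q * y) * (r + s * y) = p * r + (p * s + q * r) * y + q * s * y ^ 2 := fun y => by ring
  simp_rw [hexpand]
  have hint : ∀ g : ℝ → ℝ, Continuous g → IntervalIntegrable g volume l u :=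
    fun g hg => hg.intervalIntegrable l u
  rw [intervalIntegral.integral_add (hint _ (by fun_prop)) (hint _ (by fun_prop)),
    intervalIntegral.integral_add (hint _ (by fun_prop)) (hint _ (by fun_prop)),
    intervalIntegral.integral_const, intervalIntegral.integral_const_mul,
    intervalIntegral.integral_const_mul, integral_id, integral_pow]
  simp only [smul_eq_mul]
  ring

lemma intervalIntegral_phi_mul_phi {a b R : ℝ} (ha : 0 ≤ a) (hab : a ≤ b) (hR : 2 * b ≤ R) :
    ∫ y in 0..R + a, phi a R y * phi b R y = a * b * R - a * b ^ 2 / 4 - a ^ 3 / 12 := by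
  have hint : ∀ l u, IntervalIntegrable (fun y => phi a R y * phi b R y) volume l u :=
    fun l u =>
      ((continuous_phi (by linarith)).mul (continuous_phi (by linarith))).intervalIntegrable l u
  have hcentre : ∫ y in 0..R - b, phi a R y * phi b R y
      = ∫ y in 0..R - b, (a + 0 * y) * (b + 0 * y) := by
    refine integral_congr fun y hy => ?_
    rw [Set.uIcc_of_le (by linarith)] at hy
    rw [phi_eq_of_abs_le ha (by rw [abs_le]; constructor <;> linarith [hy.1, hy.2]),
      phi_eq_of_abs_le (by linarith) (by rw [abs_le]; constructor <;> linarith [hy.1, hy.2])]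
    ring
  have hmiddle : ∫ y in R - b..R - a, phi a R y * phi b R y
      = ∫ y in R - b..R - a, (a + 0 * y) * ((R + b) / 2 + (-1 / 2) * y) := by
    refine integral_congr fun y hy => ?_
    rw [Set.uIcc_of_le (by linarith)] at hy
    rw [phi_eq_of_abs_le ha (by rw [abs_le]; constructor <;> linarith [hy.1, hy.2]),
      phi_eq_of_mem_Icc (by linarith) (by linarith) ⟨hy.1, by linarith [hy.2]⟩]
    ring
  have hedge : ∫ y in R - a..R + a, phi a R y * phi b R y
      = ∫ y in R - a..R + a, ((R + a) / 2 + (-1 / 2) * y) * ((R + b) / 2 + (-1 / 2) * y) := by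
    refine integral_congr fun y hy => ?_
    rw [Set.uIcc_of_le (by linarith)] at hy
    rw [phi_eq_of_mem_Icc ha (by linarith) hy,
      phi_eq_of_mem_Icc (by linarith) (by linarith) ⟨by linarith [hy.1], by linarith [hy.2]⟩]
    ring
  rw [← integral_add_adjacent_intervals (hint 0 (R - b)) (hint _ _),
    ← integral_add_adjacent_intervals (hint (R - b) (R - a)) (hint _ _), hcentre, hmiddle, hedge,
    integral_affine_mul_affine, integral_affine_mul_affine, integral_affine_mul_affine]
  ring

/-- Lemma 3.1: for `0 < a ≤ b` and `R ≥ 2b`,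
`∫_ℝ (1/R) φ_{a,R}(y) φ_{b,R}(y) dy = 2ab - R⁻¹ ((1/2) a b² + (1/6) a³)`. -/
theorem stmt_3 (a b : ℝ) (ha : 0 < a) (hab : a ≤ b) (R : ℝ) (hR : 2 * b ≤ R) :
    ∫ y : ℝ, (1 / R) * phi a R y * phi b R y
      = 2 * a * b - R⁻¹ * ((1/2) * a * b ^ 2 + (1/6) * a ^ 3) := by
  have hR₀ : 0 < R := by linarith
  have hsymm : ∫ y, phi a R y * phi b R y = 2 * ∫ y in 0..R + a, phi a R y * phi b R y := by
    refine integral_eq_two_mul_intervalIntegral_of_even (by linarith)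
      (((continuous_phi hR₀.le).mul (continuous_phi hR₀.le)).intervalIntegrable _ _)
      (fun y => by rw [phi_neg, phi_neg]) (fun y hy => ?_)
    rw [phi_eq_zero hR₀.le hy.le, zero_mul]
  simp_rw [mul_assoc]
  rw [MeasureTheory.integral_const_mul, hsymm, intervalIntegral_phi_mul_phi ha.le hab hR]
  field_simp
  ring
end

section
/- Let H ∈ (1/2, 1) and let t > 0. Then lim_{R→∞} R^{−2H}·∫_0^t H·(2H−1)·∫_{ℝ²} φ_{t−s,R}(y)·φ_{t−s,R}(z)·|y−z|^{2H−2} dy dz ds = (4^H·t³)/3. -/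
/-!
By Fubini, `∫ φ_{a,R} g = ½ ∫_{-R}^{R} ∫_{x-a}^{x+a} g`, so if `Γ'' = g` this is half the
four-point combination `Γ(R+a) - Γ(R-a) - Γ(a-R) + Γ(-R-a)`. Applied twice to the kernel
`|x|^{2H-2}`, whose fourth primitive is a multiple of `|x|^{2H+2}`, this evaluates the inner double
integral in closed form as `(|2R+2a|^q + |2R-2a|^q - 2|2R|^q - 2|2a|^q) / (4(2H+1)(2H+2))` with
`q = 2H+2`. The closed form is homogeneous of degree `q` in `(a, R)`, so substituting `u = a/R`
turns the normalised time integral into `2^q t³ / (4(2H+1)(2H+2))` times `v⁻³ ∫_0^v W` with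
`v = t/R → 0⁺`, where `W(u) = |1+u|^q + |1-u|^q - 2 - 2|u|^q`. Since `W(0) = W'(0) = 0` and
`W''(0) = 2q(q-1)`, three applications of l'Hôpital's rule give `v⁻³ ∫_0^v W → q(q-1)/3`.
-/

open MeasureTheory Real intervalIntegral Filter Topology

open Set

lemma hasDerivAt_abs_rpow_of_ne_zero {x : ℝ} (hx : x ≠ 0) (p : ℝ) :
    HasDerivAt (fun x => |x| ^ p) (p * |x| ^ (p - 2) * x) x := by
  refine ((hasDerivAt_abs hx).rpow_const (Or.inl (abs_ne_zero.2 hx))).congr_deriv ?_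
  rw [show p - 1 = p - 2 + 1 by ring, rpow_add_one (abs_ne_zero.2 hx)]
  linear_combination p * |x| ^ (p - 2) * sign_mul_abs x

lemma hasDerivAt_abs_rpow_mul_self {p x : ℝ} (h : 1 < p ∨ x ≠ 0) :
    HasDerivAt (fun x => |x| ^ p * x) ((p + 1) * |x| ^ p) x := by
  have hd : HasDerivAt (fun x => |x| ^ p) (p * |x| ^ (p - 2) * x) x :=
    h.elim (hasDerivAt_abs_rpow x) (hasDerivAt_abs_rpow_of_ne_zero · p)
  refine (hd.mul (hasDerivAt_id x)).congr_deriv ?_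
  rcases eq_or_ne x 0 with rfl | hx
  · simp [zero_rpow (by linarith [h.resolve_right (by simp)] : p ≠ 0)]
  · have hx' := abs_ne_zero.2 hx
    have : |x| ^ p = |x| ^ (p - 2) * x * x := by
      rw [mul_assoc, ← abs_mul_abs_self, ← mul_assoc, ← rpow_add_one hx', ← rpow_add_one hx']
      ring_nf
    rw [this, id]
    ring

lemma continuous_abs_rpow_mul_self {p : ℝ} (hp : -1 < p) :
    Continuous fun x : ℝ => |x| ^ p * x := by
  refine continuous_iff_continuousAt.2 fun x => ?_
  rcases eq_or_ne x 0 with rfl | hx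
  · have hnorm : ∀ y : ℝ, ‖|y| ^ p * y‖ = |y| ^ (p + 1) := fun y => by
      rcases eq_or_ne y 0 with rfl | hy
      · simp [zero_rpow (by linarith : p + 1 ≠ 0)]
      · rw [norm_mul, Real.norm_eq_abs, Real.norm_eq_abs, abs_of_nonneg (by positivity),
          rpow_add_one (abs_ne_zero.2 hy)]
    have hlim : Tendsto (fun y : ℝ => |y| ^ (p + 1)) (𝓝 0) (𝓝 0) := by
      simpa [zero_rpow (by linarith : p + 1 ≠ 0)] using
        ((continuous_abs.rpow_const (p := p + 1) fun _ => Or.inr (by linarith)).tendsto 0)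
    simpa [ContinuousAt] using squeeze_zero_norm (fun y => (hnorm y).le) hlim
  · exact (hasDerivAt_abs_rpow_mul_self (Or.inr hx)).continuousAt

lemma locallyIntegrable_abs_rpow {r : ℝ} (hr : -1 < r) :
    LocallyIntegrable fun x : ℝ => |x| ^ r :=
  locallyIntegrable_of_norm_le_rpow (C := 1) (α := -r) (by simp) (by simp; linarith)
    (Eventually.of_forall fun x => by simp [abs_of_nonneg (rpow_nonneg (abs_nonneg x) r)])
    (continuous_abs.measurable.pow_const r).aestronglyMeasurable

lemma integral_abs_rpow {r : ℝ} (hr : -1 < r) (c d : ℝ) :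
    ∫ x in c..d, |x| ^ r = |d| ^ r * d / (r + 1) - |c| ^ r * c / (r + 1) :=
  integral_eq_of_hasDerivAt_off_countable _ _ (countable_singleton 0)
    ((continuous_abs_rpow_mul_self hr).div_const _).continuousOn
    (fun x hx => ((hasDerivAt_abs_rpow_mul_self (Or.inr hx.2)).div_const _).congr_deriv
      (by field_simp [show r + 1 ≠ 0 by linarith]))
    ((locallyIntegrable_abs_rpow hr).integrableOn_isCompact isCompact_uIcc).intervalIntegrable

lemma integral_phi_mul {a R : ℝ} (ha : 0 ≤ a) (hR : 0 ≤ R) {g : ℝ → ℝ}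
    (hg : LocallyIntegrable g) :
    ∫ z, phi a R z * g z = (∫ x in (-R)..R, ∫ z in (x - a)..(x + a), g z) / 2 := by
  set μ := volume.restrict (Icc (-R) R)
  let f : ℝ → ℝ → ℝ := fun x z => if |x - z| ≤ a then g z else 0
  have hwindow : ∀ x z, |x - z| ≤ a ↔ z ∈ Icc (x - a) (x + a) := fun x z => by
    rw [abs_sub_le_iff, mem_Icc]; constructor <;> rintro ⟨h₁, h₂⟩ <;> constructor <;> linarith
  have hint : Integrable (Function.uncurry f) (μ.prod volume) := by
    have hdom : Integrable ((Icc (-R - a) (R + a)).indicator g) :=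
      (hg.integrableOn_isCompact isCompact_Icc).integrable_indicator measurableSet_Icc
    refine (hdom.norm.comp_snd μ).mono' ?_ ?_
    · have hS : MeasurableSet {p : ℝ × ℝ | |p.1 - p.2| ≤ a} :=
        measurableSet_le (by fun_prop) measurable_const
      exact (hg.aestronglyMeasurable.comp_snd.indicator hS).congr
        (Eventually.of_forall fun p => by simp only [indicator_apply, mem_ofPred_eq]; rfl)
    · filter_upwards [Measure.quasiMeasurePreserving_fst.ae (ae_restrict_mem measurableSet_Icc)]
        with ⟨x, z⟩ hx
      simp only [Function.uncurry_apply_pair, f, indicator_apply]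
      split_ifs with h₁ h₂
      · exact le_rfl
      · rw [hwindow, mem_Icc] at h₁
        exact absurd ⟨by linarith [hx.1], by linarith [hx.2]⟩ h₂
      all_goals simp
  have hleft : ∫ x, ∫ z, f x z ∂volume ∂μ = ∫ x in (-R)..R, ∫ z in (x - a)..(x + a), g z := by
    rw [intervalIntegral.integral_of_le (by linarith), ← integral_Icc_eq_integral_Ioc]
    refine integral_congr_ae (Eventually.of_forall fun x => ?_)
    have hslice : (fun z => f x z) = (Icc (x - a) (x + a)).indicator g := by
      ext z; simp only [f, indicator_apply, hwindow]
    simp only [hslice, MeasureTheory.integral_indicator measurableSet_Icc]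
    rw [integral_Icc_eq_integral_Ioc, intervalIntegral.integral_of_le (by linarith)]
  have hright : ∀ z, ∫ x, f x z ∂μ = 2 * phi a R z * g z := fun z => by
    rw [phi, intervalIntegral.integral_of_le (by linarith), ← integral_Icc_eq_integral_Ioc,
      ← mul_assoc, mul_one_div_cancel two_ne_zero, one_mul, ← MeasureTheory.integral_mul_const]
    simp only [f, ite_mul, one_mul, zero_mul, μ]
  rw [← hleft, integral_integral_swap hint, integral_congr_ae (Eventually.of_forall hright),
    ← MeasureTheory.integral_div]
  congr 1 with z
  ring

lemma integral_phi_mul_eq_of_hasDerivAt {a R : ℝ} (ha : 0 ≤ a) (hR : 0 ≤ R) {g G Γ : ℝ → ℝ}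
    (hg : LocallyIntegrable g) (hG : ∀ c d, ∫ x in c..d, g x = G d - G c)
    (hΓ : ∀ x, HasDerivAt Γ (G x) x) :
    ∫ z, phi a R z * g z = (Γ (R + a) - Γ (R - a) - Γ (a - R) + Γ (-R - a)) / 2 := by
  have hG_cont : Continuous G := by
    have hG_eq : G = fun x => G 0 + ∫ z in (0 : ℝ)..x, g z := by
      ext x; rw [hG]; ring
    rw [hG_eq]
    exact continuous_const.add (continuous_primitive
      (fun c d => (hg.integrableOn_isCompact isCompact_uIcc).intervalIntegrable) 0)
  have hderiv : ∀ x, HasDerivAt (fun x => Γ (x + a) - Γ (x - a)) (G (x + a) - G (x - a)) x :=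
    fun x => ((hΓ _).comp_add_const x a).sub ((hΓ _).comp_sub_const x a)
  simp only [integral_phi_mul ha hR hg, hG]
  rw [integral_eq_sub_of_hasDerivAt (fun x _ => hderiv x)
    (Continuous.intervalIntegrable (by fun_prop) _ _)]
  ring_nf

lemma integral_phi_mul_phi_mul_kernel {a R : ℝ} (ha : 0 ≤ a) (hR : 0 ≤ R)
    {k K₁ K₂ K₃ K₄ : ℝ → ℝ} (hk : LocallyIntegrable k)
    (hK₁ : ∀ c d, ∫ x in c..d, k x = K₁ d - K₁ c)
    (hK₂ : ∀ x, HasDerivAt K₂ (K₁ x) x) (hK₃ : ∀ x, HasDerivAt K₃ (K₂ x) x)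
    (hK₄ : ∀ x, HasDerivAt K₄ (K₃ x) x) (hK₄_even : ∀ x, K₄ (-x) = K₄ x) :
    ∫ y, ∫ z, phi a R y * phi a R z * k (y - z)
      = K₄ 0
        + (K₄ (2 * R + 2 * a) + K₄ (2 * R - 2 * a) - 2 * K₄ (2 * R) - 2 * K₄ (2 * a)) / 2 := by
  let corners (K : ℝ → ℝ) (y : ℝ) : ℝ :=
    (K (y - (R + a)) - K (y - (R - a)) - K (y - (a - R)) + K (y - (-R - a))) / 2
  have hcorners : ∀ {K K' : ℝ → ℝ}, (∀ x, HasDerivAt K (K' x) x) →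
      ∀ y, HasDerivAt (corners K) (corners K' y) y := fun h y =>
    ((((h _).comp_sub_const y _).sub ((h _).comp_sub_const y _)).sub
      ((h _).comp_sub_const y _) |>.add ((h _).comp_sub_const y _)).div_const 2
  have hinner : ∀ y, ∫ z, phi a R z * k (y - z) = corners K₂ y := fun y => by
    have hky : LocallyIntegrable fun z => k (y - z) :=
      (locallyIntegrable_map_homeomorph (Homeomorph.subLeft y)).mp (by
        rwa [show ⇑(Homeomorph.subLeft y) = (y - ·) from rfl,
          (volume.measurePreserving_sub_left y).map_eq])
    refine integral_phi_mul_eq_of_hasDerivAt ha hR hky (G := fun z => -K₁ (y - z)) ?_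
      (fun z => (hK₂ _).comp_const_sub y z)
    intro c d
    rw [intervalIntegral.integral_comp_sub_left k y, hK₁]
    ring
  have hK₂_cont : Continuous K₂ := continuous_iff_continuousAt.2 fun x => (hK₂ x).continuousAt
  have hK₃_int : ∀ c d, ∫ y in c..d, corners K₂ y = corners K₃ d - corners K₃ c := fun c d =>
    integral_eq_sub_of_hasDerivAt (fun y _ => hcorners hK₃ y)
      (Continuous.intervalIntegrable (by fun_prop) _ _)
  calc ∫ y, ∫ z, phi a R y * phi a R z * k (y - z)
      = ∫ y, phi a R y * corners K₂ y := by
        congr 1 with y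
        simp_rw [mul_assoc, MeasureTheory.integral_const_mul, hinner]
    _ = _ := by
        rw [integral_phi_mul_eq_of_hasDerivAt ha hR
          (by fun_prop : Continuous (corners K₂)).locallyIntegrable hK₃_int (hcorners hK₄)]
        have e₁ := hK₄_even (2 * a)
        have e₂ := hK₄_even (2 * R)
        have e₃ := hK₄_even (2 * R - 2 * a)
        have e₄ := hK₄_even (2 * R + 2 * a)
        simp only [corners]
        ring_nf at e₁ e₂ e₃ e₄ ⊢
        linarith

/-- `Δ²_a f (R) - Δ²_a f (0)` for `f = |·| ^ q`, where
`Δ²_a f (x) = f (x + a) + f (x - a) - 2 f x`. -/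
noncomputable def absRpowSecondDiff (q a R : ℝ) : ℝ :=
  |R + a| ^ q + |R - a| ^ q - 2 * |R| ^ q - 2 * |a| ^ q

lemma absRpowSecondDiff_mul {c : ℝ} (hc : 0 ≤ c) (q a R : ℝ) :
    absRpowSecondDiff q (c * a) (c * R) = c ^ q * absRpowSecondDiff q a R := by
  simp only [absRpowSecondDiff, ← mul_add, ← mul_sub, abs_mul, abs_of_nonneg hc,
    mul_rpow hc (abs_nonneg _)]
  ring

lemma integral_phi_mul_phi_mul_abs_sub_rpow {H a R : ℝ} (hH : 1 / 2 < H) (ha : 0 ≤ a)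
    (hR : 0 ≤ R) :
    H * (2 * H - 1) * ∫ y, ∫ z, phi a R y * phi a R z * |y - z| ^ (2 * H - 2)
      = absRpowSecondDiff (2 * H + 2) (2 * a) (2 * R) / (4 * (2 * H + 1) * (2 * H + 2)) := by
  have h₁ : 1 < 2 * H := by linarith
  have h₂ : 1 < 2 * H + 2 := by linarith
  have hkernel := integral_phi_mul_phi_mul_kernel ha hR
    (k := fun x => |x| ^ (2 * H - 2))
    (K₁ := fun x => |x| ^ (2 * H - 2) * x / (2 * H - 1))
    (K₂ := fun x => |x| ^ (2 * H) / (2 * H * (2 * H - 1)))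
    (K₃ := fun x => |x| ^ (2 * H) * x / (2 * H * (2 * H - 1) * (2 * H + 1)))
    (K₄ := fun x => |x| ^ (2 * H + 2) / (2 * H * (2 * H - 1) * (2 * H + 1) * (2 * H + 2)))
    (locallyIntegrable_abs_rpow (by linarith))
    (fun c d => by rw [integral_abs_rpow (by linarith)]; ring_nf)
    (fun x => ((hasDerivAt_abs_rpow x h₁).div_const _).congr_deriv (by field_simp))
    (fun x => ((hasDerivAt_abs_rpow_mul_self (Or.inl h₁)).div_const _).congr_deriv
      (by field_simp))
    (fun x => ((hasDerivAt_abs_rpow x h₂).div_const _).congr_deriv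
      (by rw [show 2 * H + 2 - 2 = 2 * H by ring]; field_simp))
    (fun x => by simp only [abs_neg])
  rw [hkernel, absRpowSecondDiff, abs_zero, zero_rpow (by linarith)]
  field_simp (disch := linarith)
  ring

lemma integral_absRpowSecondDiff_sub (q t : ℝ) {R : ℝ} (hR : 0 < R) :
    ∫ s in (0 : ℝ)..t, absRpowSecondDiff q (2 * (t - s)) (2 * R)
      = (2 * R) ^ q * R * ∫ u in (0 : ℝ)..t / R, absRpowSecondDiff q u 1 := by
  have hscale : ∀ a, absRpowSecondDiff q (2 * a) (2 * R)
      = (2 * R) ^ q * absRpowSecondDiff q (a / R) 1 := fun a => by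
    rw [← absRpowSecondDiff_mul (by positivity), mul_one]
    congr 1
    field_simp
  rw [intervalIntegral.integral_comp_sub_left (fun a => absRpowSecondDiff q (2 * a) (2 * R)) t,
    sub_self, sub_zero]
  simp only [hscale]
  rw [intervalIntegral.integral_const_mul,
    intervalIntegral.integral_comp_div (fun u => absRpowSecondDiff q u 1) hR.ne', zero_div,
    smul_eq_mul, mul_assoc]

lemma tendsto_div_pow_three_of_hasDerivAt {f f₁ f₂ f₃ : ℝ → ℝ}
    (hf : ∀ x, HasDerivAt f (f₁ x) x) (hf₁ : ∀ x, HasDerivAt f₁ (f₂ x) x)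
    (hf₂ : ∀ x, HasDerivAt f₂ (f₃ x) x) (h₀ : f 0 = 0) (h₁ : f₁ 0 = 0) (h₂ : f₂ 0 = 0)
    (h₃ : ContinuousAt f₃ 0) :
    Tendsto (fun x => f x / x ^ 3) (𝓝[>] 0) (𝓝 (f₃ 0 / 6)) := by
  have hzero : ∀ {g : ℝ → ℝ}, ContinuousAt g 0 → g 0 = 0 → Tendsto g (𝓝[>] 0) (𝓝 0) :=
    fun hg h => by simpa [h] using hg.tendsto.mono_left (nhdsWithin_le_nhds (s := Ioi 0))
  have L₂ : Tendsto (fun x => f₂ x / (6 * x)) (𝓝[>] 0) (𝓝 (f₃ 0 / 6)) :=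
    HasDerivAt.lhopital_zero_right_on_Ioo one_pos (fun x _ => hf₂ x)
      (fun x _ => ((hasDerivAt_id x).const_mul 6).congr_deriv (mul_one 6))
      (fun _ _ => by norm_num) (hzero (hf₂ 0).continuousAt h₂) (hzero (by fun_prop) (by simp))
      ((h₃.tendsto.mono_left nhdsWithin_le_nhds).div_const 6)
  have L₁ : Tendsto (fun x => f₁ x / (3 * x ^ 2)) (𝓝[>] 0) (𝓝 (f₃ 0 / 6)) :=
    HasDerivAt.lhopital_zero_right_on_Ioo one_pos (fun x _ => hf₁ x)
      (fun x _ => ((hasDerivAt_pow 2 x).const_mul 3).congr_deriv (by ring))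
      (fun x hx => by simp [hx.1.ne']) (hzero (hf₁ 0).continuousAt h₁)
      (hzero (by fun_prop) (by simp)) L₂
  exact HasDerivAt.lhopital_zero_right_on_Ioo one_pos (fun x _ => hf x)
    (fun x _ => (hasDerivAt_pow 3 x).congr_deriv (by ring))
    (fun x hx => by simp [hx.1.ne']) (hzero (hf 0).continuousAt h₀)
    (hzero (by fun_prop) (by simp)) L₁

lemma tendsto_integral_absRpowSecondDiff_div_pow_three {q : ℝ} (hq : 3 < q) :
    Tendsto (fun v => (∫ u in (0 : ℝ)..v, absRpowSecondDiff q u 1) / v ^ 3) (𝓝[>] 0)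
      (𝓝 (q * (q - 1) / 3)) := by
  have hq₁ : 1 < q := by linarith
  have hq₂ : 1 < q - 2 := by linarith
  have hcont : Continuous fun u => absRpowSecondDiff q u 1 := by
    unfold absRpowSecondDiff; fun_prop (disch := linarith)
  have hD : ∀ u, HasDerivAt (fun u => absRpowSecondDiff q u 1)
      (q * (|1 + u| ^ (q - 2) * (1 + u)) - q * (|1 - u| ^ (q - 2) * (1 - u))
        - 2 * q * (|u| ^ (q - 2) * u)) u := fun u =>
    ((((hasDerivAt_abs_rpow _ hq₁).comp_const_add 1 u).add
      ((hasDerivAt_abs_rpow _ hq₁).comp_const_sub 1 u)).sub_const _ |>.sub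
      ((hasDerivAt_abs_rpow u hq₁).const_mul 2)).congr_deriv (by ring)
  have hD' : ∀ u, HasDerivAt
      (fun u => q * (|1 + u| ^ (q - 2) * (1 + u)) - q * (|1 - u| ^ (q - 2) * (1 - u))
        - 2 * q * (|u| ^ (q - 2) * u))
      (q * (q - 1) * (|1 + u| ^ (q - 2) + |1 - u| ^ (q - 2) - 2 * |u| ^ (q - 2))) u := fun u =>
    ((((hasDerivAt_abs_rpow_mul_self (Or.inl hq₂)).comp_const_add 1 u).const_mul q).sub
      (((hasDerivAt_abs_rpow_mul_self (Or.inl hq₂)).comp_const_sub 1 u).const_mul q) |>.sub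
      ((hasDerivAt_abs_rpow_mul_self (Or.inl hq₂)).const_mul (2 * q))).congr_deriv (by ring)
  convert tendsto_div_pow_three_of_hasDerivAt
    (fun v => (hcont.integral_hasStrictDerivAt 0 v).hasDerivAt) hD hD'
    (by simp) (by norm_num [absRpowSecondDiff, zero_rpow (by linarith : q ≠ 0)]) (by simp)
    (by fun_prop (disch := linarith)) using 2
  simp [zero_rpow (by linarith : q - 2 ≠ 0)]
  ring

lemma rpow_neg_mul_integral_eq {H t R : ℝ} (hH : 1 / 2 < H) (ht : 0 < t) (hR : t < R) :
    R ^ (-(2 * H)) * ∫ s in (0 : ℝ)..t, H * (2 * H - 1) *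
        ∫ y : ℝ, ∫ z : ℝ, phi (t - s) R y * phi (t - s) R z * |y - z| ^ (2 * H - 2)
      = 2 ^ (2 * H + 2) / (4 * (2 * H + 1) * (2 * H + 2)) * t ^ 3 *
          ((∫ u in (0 : ℝ)..t / R, absRpowSecondDiff (2 * H + 2) u 1) / (t / R) ^ 3) := by
  have hR₀ : 0 < R := ht.trans hR
  rw [intervalIntegral.integral_congr fun s hs => integral_phi_mul_phi_mul_abs_sub_rpow hH
      (sub_nonneg.2 (uIcc_of_le ht.le ▸ hs).2) hR₀.le,
    intervalIntegral.integral_div, integral_absRpowSecondDiff_sub _ t hR₀,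
    mul_rpow zero_le_two hR₀.le]
  have hpow : R ^ (-(2 * H)) * R ^ (2 * H + 2) = R ^ 2 := by
    rw [← rpow_add hR₀, show -(2 * H) + (2 * H + 2) = (2 : ℕ) by push_cast; ring, rpow_natCast]
  rw [show ∀ I C, R ^ (-(2 * H)) * (2 ^ (2 * H + 2) * R ^ (2 * H + 2) * R * I / C)
      = 2 ^ (2 * H + 2) / C * (R ^ (-(2 * H)) * R ^ (2 * H + 2)) * R * I from
    fun I C => by ring, hpow]
  field_simp

/-- For `H ∈ (1/2,1)` and `t > 0`:
`lim_{R→∞} R^{-2H} ∫_0^t H(2H-1) ∬ φ_{t-s,R}(y) φ_{t-s,R}(z) |y-z|^{2H-2} dy dz ds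
  = 4^H t³ / 3`. -/
theorem stmt_9 (H : ℝ) (hH : H ∈ Set.Ioo (1/2 : ℝ) 1) (t : ℝ) (ht : 0 < t) :
    Tendsto (fun R : ℝ =>
        R ^ (-(2 * H)) *
          ∫ s in (0:ℝ)..t, H * (2 * H - 1) *
            ∫ y : ℝ, ∫ z : ℝ, phi (t - s) R y * phi (t - s) R z * |y - z| ^ (2 * H - 2))
      atTop (𝓝 ((4 : ℝ) ^ H * t ^ 3 / 3)) := by
  have hv : Tendsto (fun R => t / R) atTop (𝓝[>] 0) :=
    tendsto_nhdsWithin_iff.2 ⟨tendsto_const_nhds.div_atTop tendsto_id,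
      (eventually_gt_atTop 0).mono fun R hR => div_pos ht hR⟩
  have hlim := ((tendsto_integral_absRpowSecondDiff_div_pow_three
    (by linarith [hH.1] : 3 < 2 * H + 2)).comp hv).const_mul
      (2 ^ (2 * H + 2) / (4 * (2 * H + 1) * (2 * H + 2)) * t ^ 3)
  convert hlim.congr' ((eventually_gt_atTop t).mono fun R hR =>
    (rpow_neg_mul_integral_eq hH.1 ht hR).symm) using 2
  have h4 : (4 : ℝ) ^ H = 2 ^ (2 * H) := by
    rw [show (4 : ℝ) = 2 ^ (2 : ℝ) by norm_num, ← rpow_mul zero_le_two]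
  have h₁ : 2 * H + 1 ≠ 0 := by linarith [hH.1]
  have h₂ : H + 1 ≠ 0 := by linarith [hH.1]
  rw [h4, rpow_add two_pos, rpow_two]
  field_simp
  ring
end

section
/- Let F be an integrable real-valued random variable on a probability space and let Z be a standard normal random variable. Then d_TV(F, Z) ≤ sup_f |E[f'(F)] − E[F·f(F)]|, where the supremum is taken over all continuously differentiable functions f : ℝ → ℝ such that ‖f‖_∞ ≤ √(π/2) and ‖f'‖_∞ ≤ 2. -/
open MeasureTheory ProbabilityTheory Real

open Set Filter

/-!
For a continuous `h : ℝ → [0, 1]` put `g = h - E h(Z)` and `φ(t) = exp (-t² / 2)`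
(`gaussWeight`). The function `f(x) = e^{x²/2} ∫_{-∞}^x g φ` (`steinSolution g`) solves Stein's
equation `f'(x) - x f(x) = g(x)`; since `∫ g φ = 0` it is also `-e^{x²/2} ∫_x^∞ g φ`, and the
Gaussian tail bounds `∫_x^∞ φ ≤ √(π/2) φ(x)` and `x ∫_x^∞ φ ≤ φ(x)` (for `x ≥ 0`) give
`|f| ≤ √(π/2)`, `|x f(x)| ≤ 1` and `|f'| ≤ 2`. Taking expectations at `F`,
`E h(F) - E h(Z) = E f'(F) - E F f(F)`, which is at most the supremum (finite because `F` is
integrable). By regularity of the laws of `F` and `Z` and Urysohn's lemma, the indicator of a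
Borel set is approximated in both laws by such functions `h`.
-/

noncomputable def gaussWeight (t : ℝ) : ℝ := rexp (-(1 / 2) * t ^ 2)

lemma gaussWeight_pos (t : ℝ) : 0 < gaussWeight t := exp_pos _

lemma continuous_gaussWeight : Continuous gaussWeight := by
  unfold gaussWeight; fun_prop

lemma gaussWeight_abs (t : ℝ) : gaussWeight |t| = gaussWeight t := by
  simp [gaussWeight]

lemma exp_sq_half_mul_gaussWeight (x : ℝ) : rexp (x ^ 2 / 2) * gaussWeight x = 1 := by
  rw [gaussWeight, ← exp_add]; ring_nf; exact exp_zero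

lemma integrable_gaussWeight : Integrable gaussWeight :=
  integrable_exp_neg_mul_sq (by norm_num)

lemma integral_gaussWeight : ∫ t, gaussWeight t = √(2 * π) := by
  simp only [gaussWeight, integral_gaussian]; ring_nf

lemma integral_Ioi_zero_gaussWeight : ∫ t in Ioi 0, gaussWeight t = √(π / 2) := by
  simp only [gaussWeight, integral_gaussian_Ioi]
  rw [show π / (1 / 2) = 2 ^ 2 * (π / 2) by ring, sqrt_mul (by norm_num), sqrt_sq (by norm_num)]
  ring

lemma integral_Iic_gaussWeight (x : ℝ) :
    ∫ t in Iic x, gaussWeight t = ∫ t in Ioi (-x), gaussWeight t := by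
  simpa [gaussWeight] using integral_comp_neg_Iic x gaussWeight

lemma hasDerivAt_gaussWeight (t : ℝ) : HasDerivAt gaussWeight (-t * gaussWeight t) t := by
  refine ((hasDerivAt_pow 2 t).const_mul (-(1 / 2) : ℝ)).exp.congr_deriv ?_
  simp only [gaussWeight]; ring

lemma tendsto_gaussWeight_atTop : Tendsto gaussWeight atTop (nhds 0) :=
  tendsto_exp_atBot.comp <| (tendsto_pow_atTop two_ne_zero).const_mul_atTop_of_neg (by norm_num)

lemma integrable_mul_gaussWeight : Integrable fun t => t * gaussWeight t :=
  integrable_mul_exp_neg_mul_sq (by norm_num)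

lemma integral_Ioi_mul_gaussWeight (x : ℝ) :
    ∫ t in Ioi x, t * gaussWeight t = gaussWeight x := by
  have := integral_Ioi_of_hasDerivAt_of_tendsto (f := fun t => -gaussWeight t) (a := x)
    continuous_gaussWeight.neg.continuousWithinAt
    (fun t _ => (hasDerivAt_gaussWeight t).neg.congr_deriv (by ring))
    integrable_mul_gaussWeight.integrableOn
    (by simpa using tendsto_gaussWeight_atTop.neg)
  simpa using this

lemma mul_integral_Ioi_gaussWeight_le (x : ℝ) :
    x * ∫ t in Ioi x, gaussWeight t ≤ gaussWeight x := by
  rw [← integral_Ioi_mul_gaussWeight x, ← integral_const_mul]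
  refine setIntegral_mono_on (integrable_gaussWeight.integrableOn.const_mul x)
    integrable_mul_gaussWeight.integrableOn measurableSet_Ioi fun t ht => ?_
  exact mul_le_mul_of_nonneg_right (le_of_lt ht) (gaussWeight_pos t).le

lemma integral_Ioi_gaussWeight_le {x : ℝ} (hx : 0 ≤ x) :
    ∫ t in Ioi x, gaussWeight t ≤ gaussWeight x * √(π / 2) := by
  -- `t² ≥ x² + (t - x)²` for `0 ≤ x ≤ t`
  have hfactor : ∀ t ∈ Ioi x, gaussWeight t ≤ gaussWeight x * gaussWeight (t - x) := by
    intro t ht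
    rw [gaussWeight, gaussWeight, gaussWeight, ← exp_add, exp_le_exp]
    nlinarith [mul_nonneg hx (sub_nonneg.mpr (le_of_lt ht))]
  have hshift : ∫ t in Ioi x, gaussWeight (t - x) = ∫ t in Ioi 0, gaussWeight t := by
    simpa [preimage_sub_const_Ioi] using
      (measurePreserving_sub_right volume x).setIntegral_preimage_emb
        (measurableEmbedding_subRight x) gaussWeight (Ioi 0)
  calc ∫ t in Ioi x, gaussWeight t
      ≤ ∫ t in Ioi x, gaussWeight x * gaussWeight (t - x) :=
        setIntegral_mono_on integrable_gaussWeight.integrableOn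
          ((integrable_gaussWeight.comp_sub_right x).const_mul _).integrableOn
          measurableSet_Ioi hfactor
    _ = gaussWeight x * √(π / 2) := by
      rw [integral_const_mul, hshift, integral_Ioi_zero_gaussWeight]

lemma hasDerivAt_integral_Iic {k : ℝ → ℝ} (hk : Continuous k) (hki : Integrable k) (x : ℝ) :
    HasDerivAt (fun u => ∫ t in Iic u, k t) (k x) x := by
  have hsplit : (fun u => ∫ t in Iic u, k t) =
      fun u => (∫ t in (0 : ℝ)..u, k t) + ∫ t in Iic 0, k t := by
    ext u
    rw [← intervalIntegral.integral_Iic_sub_Iic (μ := volume) (a := 0) (b := u)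
      hki.integrableOn hki.integrableOn]
    ring
  rw [hsplit]
  exact (intervalIntegral.integral_hasDerivAt_right (hk.intervalIntegrable _ _)
    (hk.stronglyMeasurableAtFilter _ _) hk.continuousAt).add_const _

section SteinSolution

variable {g : ℝ → ℝ} {M : ℝ}

noncomputable def steinSolution (g : ℝ → ℝ) (x : ℝ) : ℝ :=
  rexp (x ^ 2 / 2) * ∫ t in Iic x, g t * gaussWeight t

lemma integrable_mul_gaussWeight_of_abs_le (hg : AEStronglyMeasurable g)
    (hgM : ∀ t, |g t| ≤ M) :
    Integrable fun t => g t * gaussWeight t :=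
  integrable_gaussWeight.bdd_mul hg (Eventually.of_forall hgM)

lemma abs_setIntegral_mul_gaussWeight_le (hgM : ∀ t, |g t| ≤ M) (s : Set ℝ) :
    |∫ t in s, g t * gaussWeight t| ≤ M * ∫ t in s, gaussWeight t := by
  rw [← integral_const_mul, ← Real.norm_eq_abs]
  refine norm_integral_le_of_norm_le (integrable_gaussWeight.integrableOn.const_mul M)
    (Eventually.of_forall fun t => ?_)
  rw [norm_mul, Real.norm_eq_abs, Real.norm_of_nonneg (gaussWeight_pos t).le]
  exact mul_le_mul_of_nonneg_right (hgM t) (gaussWeight_pos t).le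

lemma abs_integral_Iic_mul_gaussWeight_le (hg : AEStronglyMeasurable g) (hgM : ∀ t, |g t| ≤ M)
    (hg0 : ∫ t, g t * gaussWeight t = 0) (x : ℝ) :
    |∫ t in Iic x, g t * gaussWeight t| ≤ M * ∫ t in Ioi |x|, gaussWeight t := by
  rcases le_total 0 x with hx | hx
  · have hi := integrable_mul_gaussWeight_of_abs_le hg hgM
    rw [abs_of_nonneg hx, eq_neg_of_add_eq_zero_left
      ((intervalIntegral.integral_Iic_add_Ioi (b := x) hi.integrableOn hi.integrableOn).trans hg0),
      abs_neg]
    exact abs_setIntegral_mul_gaussWeight_le hgM _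
  · rw [abs_of_nonpos hx, ← integral_Iic_gaussWeight]
    exact abs_setIntegral_mul_gaussWeight_le hgM _

variable (hg : Continuous g) (hgM : ∀ t, |g t| ≤ M) (hg0 : ∫ t, g t * gaussWeight t = 0)
include hg hgM hg0

lemma abs_steinSolution_le (x : ℝ) : |steinSolution g x| ≤ M * √(π / 2) := by
  have hM : 0 ≤ M := (abs_nonneg _).trans (hgM 0)
  calc |steinSolution g x|
      = rexp (x ^ 2 / 2) * |∫ t in Iic x, g t * gaussWeight t| := by
        rw [steinSolution, abs_mul, abs_of_pos (exp_pos _)]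
    _ ≤ rexp (x ^ 2 / 2) * (M * (gaussWeight x * √(π / 2))) := by
        gcongr
        refine (abs_integral_Iic_mul_gaussWeight_le hg.aestronglyMeasurable hgM hg0 x).trans ?_
        rw [← gaussWeight_abs x]
        exact mul_le_mul_of_nonneg_left (integral_Ioi_gaussWeight_le (abs_nonneg x)) hM
    _ = M * √(π / 2) := by
        linear_combination M * √(π / 2) * exp_sq_half_mul_gaussWeight x

lemma abs_mul_steinSolution_le (x : ℝ) : |x * steinSolution g x| ≤ M := by
  have hM : 0 ≤ M := (abs_nonneg _).trans (hgM 0)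
  calc |x * steinSolution g x|
      = rexp (x ^ 2 / 2) * (|x| * |∫ t in Iic x, g t * gaussWeight t|) := by
        rw [steinSolution, abs_mul, abs_mul, abs_of_pos (exp_pos _)]; ring
    _ ≤ rexp (x ^ 2 / 2) * (M * gaussWeight x) := by
        refine mul_le_mul_of_nonneg_left ?_ (exp_pos _).le
        calc |x| * |∫ t in Iic x, g t * gaussWeight t|
            ≤ |x| * (M * ∫ t in Ioi |x|, gaussWeight t) := by
              gcongr
              exact abs_integral_Iic_mul_gaussWeight_le hg.aestronglyMeasurable hgM hg0 x
          _ = M * (|x| * ∫ t in Ioi |x|, gaussWeight t) := by ring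
          _ ≤ M * gaussWeight x := by
              rw [← gaussWeight_abs x]; gcongr; exact mul_integral_Ioi_gaussWeight_le |x|
    _ = M := by linear_combination M * exp_sq_half_mul_gaussWeight x

omit hg0 in
lemma hasDerivAt_steinSolution (x : ℝ) :
    HasDerivAt (steinSolution g) (x * steinSolution g x + g x) x := by
  have hexp : HasDerivAt (fun x => rexp (x ^ 2 / 2)) (rexp (x ^ 2 / 2) * x) x := by
    refine ((hasDerivAt_pow 2 x).div_const 2).exp.congr_deriv ?_; ring
  have hint := integrable_mul_gaussWeight_of_abs_le hg.aestronglyMeasurable hgM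
  refine (hexp.mul (hasDerivAt_integral_Iic (k := fun t => g t * gaussWeight t)
    (hg.mul continuous_gaussWeight) hint x)).congr_deriv ?_
  rw [steinSolution]
  linear_combination g x * exp_sq_half_mul_gaussWeight x

omit hg0 in
lemma deriv_steinSolution : deriv (steinSolution g) = fun x => x * steinSolution g x + g x :=
  funext fun x => (hasDerivAt_steinSolution hg hgM x).deriv

omit hg0 in
lemma contDiff_steinSolution : ContDiff ℝ 1 (steinSolution g) := by
  have hdiff : Differentiable ℝ (steinSolution g) :=
    fun x => (hasDerivAt_steinSolution hg hgM x).differentiableAt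
  rw [contDiff_one_iff_deriv, deriv_steinSolution hg hgM]
  exact ⟨hdiff, (continuous_id.mul hdiff.continuous).add hg⟩

lemma abs_deriv_steinSolution_le (x : ℝ) : |deriv (steinSolution g) x| ≤ 2 * M := by
  rw [deriv_steinSolution hg hgM]
  linarith [abs_add_le (x * steinSolution g x) (g x), abs_mul_steinSolution_le hg hgM hg0 x,
    hgM x]

lemma exists_steinSolution : ∃ f : ℝ → ℝ, ContDiff ℝ 1 f ∧ (∀ x, |f x| ≤ M * √(π / 2)) ∧
    (∀ x, |deriv f x| ≤ 2 * M) ∧ (∀ x, |x * f x| ≤ M) ∧ ∀ x, deriv f x - x * f x = g x :=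
  ⟨steinSolution g, contDiff_steinSolution hg hgM, abs_steinSolution_le hg hgM hg0,
    abs_deriv_steinSolution_le hg hgM hg0, abs_mul_steinSolution_le hg hgM hg0,
    fun x => by rw [deriv_steinSolution hg hgM]; ring⟩

end SteinSolution

lemma integral_gaussianReal_eq_integral_mul_gaussWeight (u : ℝ → ℝ) :
    ∫ x, u x ∂gaussianReal 0 1 = (√(2 * π))⁻¹ * ∫ t, u t * gaussWeight t := by
  rw [integral_gaussianReal_eq_integral_smul one_ne_zero, ← integral_const_mul]
  congr 1 with t
  simp only [gaussianPDFReal, gaussWeight, smul_eq_mul, NNReal.coe_one]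
  ring_nf

lemma integral_sub_integral_gaussianReal_mul_gaussWeight {u : ℝ → ℝ}
    (hu : Integrable fun t => u t * gaussWeight t) :
    ∫ t, (u t - ∫ x, u x ∂gaussianReal 0 1) * gaussWeight t = 0 := by
  simp_rw [sub_mul]
  rw [integral_sub hu (integrable_gaussWeight.const_mul _), integral_const_mul,
    integral_gaussWeight, integral_gaussianReal_eq_integral_mul_gaussWeight]
  field_simp
  ring

lemma exists_steinSolution_integral_eq {Ω : Type*} [MeasureSpace Ω]
    [IsProbabilityMeasure (ℙ : Measure Ω)] {F : Ω → ℝ} (hF : AEMeasurable F) {h : ℝ → ℝ}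
    (hh : Continuous h) (hh01 : ∀ x, h x ∈ Icc (0 : ℝ) 1) :
    ∃ f : ℝ → ℝ, ContDiff ℝ 1 f ∧ (∀ x, |f x| ≤ √(π / 2)) ∧ (∀ x, |deriv f x| ≤ 2) ∧
      (∫ ω, h (F ω)) - ∫ x, h x ∂gaussianReal 0 1 =
        (∫ ω, deriv f (F ω)) - ∫ ω, F ω * f (F ω) := by
  set c := ∫ x, h x ∂gaussianReal 0 1
  have hc : c ∈ Icc (0 : ℝ) 1 :=
    ⟨integral_nonneg fun x => (hh01 x).1,
      (integral_mono_of_nonneg (ae_of_all _ fun x => (hh01 x).1) (integrable_const 1)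
        (ae_of_all _ fun x => (hh01 x).2)).trans (by simp)⟩
  set g := fun t => h t - c
  have hg : Continuous g := hh.sub continuous_const
  have hg1 : ∀ t, |g t| ≤ 1 := fun t => abs_le.mpr
    ⟨by linarith [(hh01 t).1, hc.2], by linarith [(hh01 t).2, hc.1]⟩
  have hg0 : ∫ t, g t * gaussWeight t = 0 := integral_sub_integral_gaussianReal_mul_gaussWeight
    (integrable_mul_gaussWeight_of_abs_le hh.aestronglyMeasurable
      fun t => (abs_of_nonneg (hh01 t).1).trans_le (hh01 t).2)
  obtain ⟨f, hf, hfa, hfb, hxf, hstein⟩ := exists_steinSolution hg hg1 hg0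
  refine ⟨f, hf, fun x => by simpa using hfa x, fun x => by simpa using hfb x, ?_⟩
  have hint₁ : Integrable fun ω => deriv f (F ω) :=
    .of_bound ((measurable_deriv f).comp_aemeasurable hF).aestronglyMeasurable 2
      (ae_of_all _ fun ω => by simpa using hfb (F ω))
  have hint₂ : Integrable fun ω => F ω * f (F ω) :=
    .of_bound (hF.mul (hf.continuous.measurable.comp_aemeasurable hF)).aestronglyMeasurable 1
      (ae_of_all _ fun ω => hxf (F ω))
  have hint₃ : Integrable fun ω => h (F ω) :=
    .of_bound (hh.measurable.comp_aemeasurable hF).aestronglyMeasurable 1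
      (ae_of_all _ fun ω => by
        rw [Real.norm_eq_abs, abs_of_nonneg (hh01 (F ω)).1]; exact (hh01 (F ω)).2)
  rw [← integral_sub hint₁ hint₂]
  simp only [hstein, g]
  rw [integral_sub hint₃ (integrable_const c), integral_const, probReal_univ, one_smul]

lemma bddAbove_abs_integral_deriv_sub_integral_mul {Ω : Type*} [MeasureSpace Ω]
    [IsProbabilityMeasure (ℙ : Measure Ω)] {F : Ω → ℝ} (hF : Integrable F) (a b : ℝ) :
    BddAbove (range fun f : {f : ℝ → ℝ // ContDiff ℝ 1 f ∧ (∀ x, |f x| ≤ a) ∧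
        (∀ x, |deriv f x| ≤ b)} => |(∫ ω, deriv f.1 (F ω)) - ∫ ω, F ω * f.1 (F ω)|) := by
  refine ⟨b + a * ∫ ω, |F ω|, ?_⟩
  rintro _ ⟨⟨f, -, hfa, hfb⟩, rfl⟩
  have h₁ : |∫ ω, deriv f (F ω)| ≤ b := by
    simpa using norm_integral_le_of_norm_le_const
      (ae_of_all ℙ fun ω => (Real.norm_eq_abs _).trans_le (hfb (F ω)))
  have h₂ : |∫ ω, F ω * f (F ω)| ≤ a * ∫ ω, |F ω| := by
    rw [← integral_const_mul, ← Real.norm_eq_abs]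
    refine norm_integral_le_of_norm_le (hF.abs.const_mul a) (ae_of_all _ fun ω => ?_)
    rw [norm_mul, Real.norm_eq_abs, Real.norm_eq_abs, mul_comm]
    exact mul_le_mul_of_nonneg_right (hfa (F ω)) (abs_nonneg _)
  exact (abs_sub _ _).trans (add_le_add h₁ h₂)

lemma abs_integral_sub_measureReal_le {X : Type*} [MeasurableSpace X] {μ : Measure X}
    [IsFiniteMeasure μ] {K B U : Set X} (hKB : K ⊆ B) (hBU : B ⊆ U) (hK : MeasurableSet K)
    (hU : MeasurableSet U) {h : X → ℝ} (hh : Integrable h μ) (hKh : K.indicator 1 ≤ h)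
    (hhU : h ≤ U.indicator 1) :
    |(∫ x, h x ∂μ) - μ.real B| ≤ μ.real (U \ K) := by
  have hK_le : μ.real K ≤ ∫ x, h x ∂μ := by
    rw [← integral_indicator_one hK]
    exact integral_mono ((integrable_const 1).indicator hK) hh hKh
  have hle_U : ∫ x, h x ∂μ ≤ μ.real U := by
    rw [← integral_indicator_one hU]
    exact integral_mono hh ((integrable_const 1).indicator hU) hhU
  rw [measureReal_sdiff (hKB.trans hBU) hK, abs_sub_le_iff]
  constructor <;> linarith [measureReal_mono hKB (μ := μ), measureReal_mono hBU (μ := μ)]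

lemma exists_isClosed_isOpen_measure_sdiff_lt {X : Type*} [TopologicalSpace X]
    [MeasurableSpace X] [OpensMeasurableSpace X] {μ : Measure X} [IsFiniteMeasure μ]
    [μ.WeaklyRegular] {B : Set X}
    (hB : MeasurableSet B) {ε : ENNReal} (hε : ε ≠ 0) :
    ∃ K U, IsClosed K ∧ IsOpen U ∧ K ⊆ B ∧ B ⊆ U ∧ μ (U \ K) < ε := by
  obtain ⟨K, hKB, hK, hBK⟩ := hB.exists_isClosed_sdiff_lt (measure_ne_top μ B)
    (ENNReal.half_pos hε).ne'
  obtain ⟨U, hBU, hU, -, hUB⟩ := hB.exists_isOpen_sdiff_lt (measure_ne_top μ B)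
    (ENNReal.half_pos hε).ne'
  refine ⟨K, U, hK, hU, hKB, hBU, ?_⟩
  calc μ (U \ K) ≤ μ (U \ B) + μ (B \ K) :=
        (measure_mono (sdiff_triangle U B K)).trans (measure_union_le _ _)
    _ < ε / 2 + ε / 2 := ENNReal.add_lt_add hUB hBK
    _ = ε := ENNReal.add_halves ε

lemma abs_measureReal_sub_le_of_forall_continuous {X : Type*} [MetricSpace X]
    [MeasurableSpace X] [BorelSpace X] {μ ν : Measure X} [IsFiniteMeasure μ] [IsFiniteMeasure ν]
    {S : ℝ}
    (hS : ∀ h : X → ℝ, Continuous h → (∀ x, h x ∈ Icc (0 : ℝ) 1) →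
      |(∫ x, h x ∂μ) - ∫ x, h x ∂ν| ≤ S)
    {B : Set X} (hB : MeasurableSet B) : |μ.real B - ν.real B| ≤ S := by
  refine le_of_forall_pos_le_add fun ε hε => ?_
  obtain ⟨K, U, hK, hU, hKB, hBU, hUK⟩ :=
    exists_isClosed_isOpen_measure_sdiff_lt (μ := μ + ν) hB (ENNReal.ofReal_pos.mpr hε).ne'
  obtain ⟨h, h0, h1, h01⟩ := exists_continuous_zero_one_of_isClosed hU.isClosed_compl hK
    (disjoint_compl_left_iff_subset.mpr (hKB.trans hBU))
  have hKh : K.indicator 1 ≤ ⇑h := fun x => by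
    by_cases hx : x ∈ K
    · simp [hx, h1 hx]
    · simp [hx, (h01 x).1]
  have hhU : ⇑h ≤ U.indicator 1 := fun x => by
    by_cases hx : x ∈ U
    · simp [hx, (h01 x).2]
    · simp [hx, h0 (show x ∈ Uᶜ from hx)]
  have hint : ∀ m : Measure X, [IsFiniteMeasure m] → Integrable h m := fun m _ =>
    .of_bound h.continuous.aestronglyMeasurable 1 (ae_of_all _ fun x => by
      rw [Real.norm_eq_abs, abs_of_nonneg (h01 x).1]; exact (h01 x).2)
  have hμ := abs_integral_sub_measureReal_le hKB hBU hK.measurableSet hU.measurableSet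
    (hint μ) hKh hhU
  have hν := abs_integral_sub_measureReal_le hKB hBU hK.measurableSet hU.measurableSet
    (hint ν) hKh hhU
  have hsum : μ.real (U \ K) + ν.real (U \ K) ≤ ε := by
    rw [← measureReal_add_apply]
    exact ENNReal.toReal_le_of_le_ofReal hε.le hUK.le
  have := hS h h.continuous h01
  rw [abs_le] at *
  constructor <;> linarith

/-- Theorem 2.3 (Stein's bound): for an integrable random variable `F` and a standard
normal `Z` (with law `gaussianReal 0 1`),
`d_TV(F, Z) ≤ sup { |E[f'(F)] - E[F f(F)]| : f ∈ C¹(ℝ), ‖f‖_∞ ≤ √(π/2), ‖f'‖_∞ ≤ 2 }`,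
where `d_TV` is the supremum over Borel sets `B` of `|P(F ∈ B) - P(Z ∈ B)|`. -/
theorem stmt_11 {Ω : Type*} [MeasureSpace Ω] [IsProbabilityMeasure (ℙ : Measure Ω)]
    (F : Ω → ℝ) (hF : Integrable F) :
    ∀ B : Set ℝ, MeasurableSet B →
      |(ℙ (F ⁻¹' B)).toReal - ((gaussianReal 0 1) B).toReal| ≤
        ⨆ f : {f : ℝ → ℝ // ContDiff ℝ 1 f ∧ (∀ x, |f x| ≤ Real.sqrt (π / 2)) ∧
            (∀ x, |deriv f x| ≤ 2)},
          |(∫ ω, deriv f.1 (F ω)) - ∫ ω, F ω * f.1 (F ω)| := by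
  intro B hB
  rw [← Measure.map_apply_of_aemeasurable hF.aemeasurable hB]
  have := Measure.isProbabilityMeasure_map (μ := ℙ) hF.aemeasurable
  refine abs_measureReal_sub_le_of_forall_continuous (fun h hh hh01 => ?_) hB
  obtain ⟨f, hf, hfa, hfb, heq⟩ := exists_steinSolution_integral_eq hF.aemeasurable hh hh01
  rw [integral_map hF.aemeasurable hh.aestronglyMeasurable, heq]
  exact le_ciSup (bddAbove_abs_integral_deriv_sub_integral_mul hF _ _) ⟨f, hf, hfa, hfb⟩
end

section
/- Let H ∈ (1/2, 1) and t > 0. There exist constants C > 0 and R₀ > 0 (depending only on H and t) such that for all R ≥ R₀: ∫_{[−R,R]⁴} ∫_{ℝ⁶} 1_{{|x₁−z₁| ≤ t}}·1_{{|x₂−z₂| ≤ t}}·1_{{|x₃−y₃| ≤ t}}·1_{{|x₄−y₄| ≤ t}}·1_{{|y₁−z₁| ≤ t}}·1_{{|y₂−z₂| ≤ t}}·|y₁−y₃|^{2H−2}·|y₂−y₄|^{2H−2}·|z₁−z₂|^{2H−2} dy₁ dy₂ dy₃ dy₄ dz₁ dz₂ dx₁ dx₂ dx₃ dx₄ ≤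 C·R^{6H−2}. -/
/-!
Trading each constraint `|yᵢ - zᵢ| ≤ t` for the weaker `|xᵢ - yᵢ| ≤ 2t` decouples the variables,
and the six inner integrals can then be done one at a time: each contributes either a window
length or a window mass `Φₛ(u) = ∫_{u-s}^{u+s} |c|^p` of the kernel, recentred at the outer
variables at the cost of widening the window to `2t` or `3t`. This bounds the inner integral by
`32 t³ Φ_{2t}(x₁ - x₂) Φ_{3t}(x₁ - x₃) Φ_{3t}(x₂ - x₄)`. Writing `Φₛ` as a difference of two shifts
of the odd, increasing primitive of `|c|^p` gives `∫_{-2R}^{2R} Φₛ ≤ 4s (3R)^{p+1} / (p+1)`, so the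
four outer integrals contribute `R · (R^{p+1})³ = R^{6H-2}` for `p = 2H - 2`.
-/
open MeasureTheory Real intervalIntegral Set

namespace TenfoldIntegral

local notation "𝕀" t:max a:max b:max => (if |a - b| ≤ t then (1:ℝ) else 0)

section AbsRpow

variable {p : ℝ}

lemma intervalIntegrable_abs_rpow (hp : -1 < p) (a b : ℝ) :
    IntervalIntegrable (fun x : ℝ => |x| ^ p) volume a b := by
  have h0 : ∀ c, 0 ≤ c → IntervalIntegrable (fun x : ℝ => |x| ^ p) volume 0 c := by
    intro c hc
    have := intervalIntegrable_rpow' (a := 0) (b := c) hp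
    rw [intervalIntegrable_iff, uIoc_of_le hc] at this ⊢
    exact this.congr_fun (fun x hx => by rw [abs_of_pos hx.1]) measurableSet_Ioc
  have hall : ∀ c, IntervalIntegrable (fun x : ℝ => |x| ^ p) volume 0 c := by
    intro c
    rcases le_total 0 c with hc | hc
    · exact h0 c hc
    · rw [IntervalIntegrable.iff_comp_neg]
      simpa only [abs_neg, neg_zero] using h0 (-c) (by linarith)
  exact (hall a).symm.trans (hall b)

noncomputable def absRpowPrimitive (p x : ℝ) : ℝ := ∫ c in (0:ℝ)..x, |c| ^ p

lemma absRpowPrimitive_sub (hp : -1 < p) (a b : ℝ) :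
    absRpowPrimitive p b - absRpowPrimitive p a = ∫ c in a..b, |c| ^ p :=
  integral_interval_sub_left (intervalIntegrable_abs_rpow hp _ _)
    (intervalIntegrable_abs_rpow hp _ _)

lemma continuous_absRpowPrimitive (hp : -1 < p) : Continuous (absRpowPrimitive p) :=
  continuous_primitive (fun _ _ => intervalIntegrable_abs_rpow hp _ _) 0

lemma monotone_absRpowPrimitive (hp : -1 < p) : Monotone (absRpowPrimitive p) := fun a b hab =>
  sub_nonneg.mp <| (absRpowPrimitive_sub hp a b).symm ▸ integral_nonneg hab fun _ _ => by positivity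

lemma absRpowPrimitive_neg (x : ℝ) : absRpowPrimitive p (-x) = -absRpowPrimitive p x := by
  have h := integral_comp_neg (a := 0) (b := -x) (fun c => |c| ^ p)
  simp only [abs_neg, neg_neg, neg_zero] at h
  rw [absRpowPrimitive, absRpowPrimitive, h, integral_symm]

lemma absRpowPrimitive_of_nonneg (hp : -1 < p) {x : ℝ} (hx : 0 ≤ x) :
    absRpowPrimitive p x = x ^ (p + 1) / (p + 1) := by
  rw [absRpowPrimitive, integral_congr (g := fun c => c ^ p) fun c hc => ?_,
    integral_rpow (Or.inl hp), zero_rpow (by linarith), sub_zero]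
  rw [uIcc_of_le hx] at hc
  simp only [abs_of_nonneg hc.1]

end AbsRpow

section WindowMass

variable {p : ℝ}

noncomputable def windowMass (p s u : ℝ) : ℝ := ∫ c in (u - s)..(u + s), |c| ^ p

lemma windowMass_nonneg {s : ℝ} (hs : 0 ≤ s) (u : ℝ) : 0 ≤ windowMass p s u :=
  integral_nonneg (by linarith) fun _ _ => by positivity

lemma windowMass_eq_sub (hp : -1 < p) (s u : ℝ) :
    windowMass p s u = absRpowPrimitive p (u + s) - absRpowPrimitive p (u - s) :=
  (absRpowPrimitive_sub hp _ _).symm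

lemma continuous_windowMass (hp : -1 < p) (s : ℝ) : Continuous (windowMass p s) := by
  have := continuous_absRpowPrimitive hp
  rw [show windowMass p s = _ from funext (windowMass_eq_sub hp s)]
  fun_prop

lemma windowMass_le_windowMass (hp : -1 < p) {s s' u v : ℝ} (hs : 0 ≤ s)
    (h1 : u - s' ≤ v - s) (h2 : v + s ≤ u + s') : windowMass p s v ≤ windowMass p s' u :=
  integral_mono_interval h1 (by linarith) h2 (ae_of_all _ fun _ => by positivity)
    (intervalIntegrable_abs_rpow hp _ _)

lemma integral_windowMass_le (hp : -1 < p) {s A : ℝ} (hs : 0 ≤ s) (hA : 0 ≤ A) :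
    ∫ u in (-A)..A, windowMass p s u ≤ 4 * s * ((A + s) ^ (p + 1) / (p + 1)) := by
  set K := absRpowPrimitive p
  have hKc : Continuous K := continuous_absRpowPrimitive hp
  have hK : ∀ a b, IntervalIntegrable K volume a b := hKc.intervalIntegrable
  -- the two shifted integrals of `K` cancel except on windows of width `2s` around `±A`
  have hsplit : ∫ u in (-A)..A, windowMass p s u =
      (∫ u in (A - s)..(A + s), K u) - ∫ u in (-A - s)..(-A + s), K u := by
    simp_rw [windowMass_eq_sub hp]
    rw [integral_sub ((by fun_prop : Continuous fun u => K (u + s)).intervalIntegrable _ _)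
        ((by fun_prop : Continuous fun u => K (u - s)).intervalIntegrable _ _),
      integral_comp_add_right K, integral_comp_sub_right K,
      integral_interval_sub_interval_comm' (hK _ _) (hK _ _) (hK _ _)]
  have hright : ∫ u in (A - s)..(A + s), K u ≤ 2 * s * K (A + s) := by
    calc _ ≤ ∫ _ in (A - s)..(A + s), K (A + s) :=
          integral_mono_on (by linarith) (hK _ _) intervalIntegrable_const
            fun u hu => monotone_absRpowPrimitive hp hu.2
      _ = _ := by rw [intervalIntegral.integral_const, smul_eq_mul]; ring
  have hleft : -(2 * s * K (A + s)) ≤ ∫ u in (-A - s)..(-A + s), K u := by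
    calc _ = ∫ _ in (-A - s)..(-A + s), K (-(A + s)) := by
          rw [intervalIntegral.integral_const, smul_eq_mul,
            show K (-(A + s)) = -K (A + s) from absRpowPrimitive_neg _]
          ring
      _ ≤ _ := integral_mono_on (by linarith) intervalIntegrable_const (hK _ _)
            fun u hu => monotone_absRpowPrimitive hp (by linarith [hu.1])
  have hval : K (A + s) = (A + s) ^ (p + 1) / (p + 1) :=
    absRpowPrimitive_of_nonneg hp (by linarith)
  rw [hval] at hright hleft
  linarith

lemma integral_windowMass_sub_le (hp : -1 < p) {s R x : ℝ} (hs : 0 ≤ s) (hsR : s ≤ R)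
    (hx : |x| ≤ R) :
    ∫ w in (-R)..R, windowMass p s (x - w) ≤ 4 * s * ((3 * R) ^ (p + 1) / (p + 1)) := by
  obtain ⟨hx1, hx2⟩ := abs_le.mp hx
  rw [integral_comp_sub_left (windowMass p s) x]
  calc _ ≤ ∫ u in (-(2 * R))..(2 * R), windowMass p s u :=
        integral_mono_interval (by linarith) (by linarith) (by linarith)
          (ae_of_all _ (windowMass_nonneg hs)) ((continuous_windowMass hp s).intervalIntegrable _ _)
    _ ≤ 4 * s * ((2 * R + s) ^ (p + 1) / (p + 1)) := integral_windowMass_le hp hs (by linarith)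
    _ ≤ _ := by gcongr <;> linarith

end WindowMass

section Window

variable {p t : ℝ}

lemma window_mul_eq_indicator (t x : ℝ) (f : ℝ → ℝ) :
    (fun z => 𝕀 t x z * f z) = (Icc (x - t) (x + t)).indicator f := by
  ext z
  have hmem : |x - z| ≤ t ↔ z ∈ Icc (x - t) (x + t) := by
    rw [abs_le, mem_Icc]
    constructor <;> rintro ⟨h1, h2⟩ <;> constructor <;> linarith
  by_cases hz : z ∈ Icc (x - t) (x + t) <;> simp [hz, hmem]

lemma integral_window_mul (ht : 0 ≤ t) (x : ℝ) (f : ℝ → ℝ) :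
    ∫ z, 𝕀 t x z * f z = ∫ z in (x - t)..(x + t), f z := by
  rw [window_mul_eq_indicator, MeasureTheory.integral_indicator measurableSet_Icc,
    integral_Icc_eq_integral_Ioc, integral_of_le (by linarith)]

lemma integrable_window_mul (ht : 0 ≤ t) {x : ℝ} {f : ℝ → ℝ}
    (hf : IntervalIntegrable f volume (x - t) (x + t)) : Integrable fun z => 𝕀 t x z * f z := by
  rw [window_mul_eq_indicator, integrable_indicator_iff measurableSet_Icc,
    integrableOn_Icc_iff_integrableOn_Ioc]
  exact (intervalIntegrable_iff_integrableOn_Ioc_of_le (by linarith)).mp hf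

lemma integral_window (ht : 0 ≤ t) (x : ℝ) : ∫ z, 𝕀 t x z = 2 * t := by
  simpa [two_mul] using integral_window_mul ht x 1

lemma integrable_window (ht : 0 ≤ t) (x : ℝ) : Integrable fun z => 𝕀 t x z := by
  simpa using integrable_window_mul ht (x := x) (f := 1) intervalIntegrable_const

lemma integral_window_mul_abs_rpow (ht : 0 ≤ t) (x y : ℝ) :
    ∫ z, 𝕀 t x z * |y - z| ^ p = windowMass p t (y - x) := by
  rw [integral_window_mul ht, integral_comp_sub_left (fun c => |c| ^ p) y, windowMass]
  congr 1 <;> ring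

lemma integrable_window_mul_abs_rpow (hp : -1 < p) (ht : 0 ≤ t) (x y : ℝ) :
    Integrable fun z => 𝕀 t x z * |y - z| ^ p :=
  integrable_window_mul ht <| by
    simpa using (intervalIntegrable_abs_rpow hp (y - (x - t)) (y - (x + t))).comp_sub_left y

lemma window_mul_window_le {s s' s'' a b c : ℝ} (h : s + s' ≤ s'') :
    𝕀 s a b * 𝕀 s' c b ≤ 𝕀 s'' a c * 𝕀 s a b := by
  have htri : |a - b| ≤ s → |c - b| ≤ s' → |a - c| ≤ s'' := fun h1 h2 =>
    (abs_sub_le a b c).trans (by rw [abs_sub_comm b c]; linarith)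
  split_ifs <;> norm_num
  exact absurd (htri ‹_› ‹_›) ‹_›

lemma window_mul_windowMass_le (hp : -1 < p) {d s s' a b c : ℝ} (hs : 0 ≤ s) (h : s + d ≤ s') :
    𝕀 d a b * windowMass p s (b - c) ≤ 𝕀 d a b * windowMass p s' (a - c) := by
  split_ifs with hab
  · obtain ⟨h1, h2⟩ := abs_le.mp hab
    simpa using windowMass_le_windowMass hp hs (by linarith) (by linarith)
  · simp

end Window

lemma integral_le_mul_integral {F g : ℝ → ℝ} (c : ℝ) (hF : ∀ v, 0 ≤ F v) (hg : Integrable g)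
    (hFg : ∀ v, F v ≤ c * g v) : ∫ v, F v ≤ c * ∫ v, g v := by
  rw [← MeasureTheory.integral_const_mul]
  exact integral_mono_of_nonneg (ae_of_all _ hF) (hg.const_mul c) (ae_of_all _ hFg)

-- reducible, so that `positivity` sees through it
noncomputable abbrev integrandI (p t x1 x2 x3 x4 y1 y2 y3 y4 z1 z2 : ℝ) : ℝ :=
  𝕀 t x1 z1 * 𝕀 t x2 z2 * 𝕀 t x3 y3 * 𝕀 t x4 y4 * 𝕀 t y1 z1 * 𝕀 t y2 z2 *
    (|y1 - y3| ^ p * |y2 - y4| ^ p * |z1 - z2| ^ p)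

section InnerIntegral

variable {p t : ℝ} (x1 x2 x3 x4 : ℝ)

lemma integrandI_le (y1 y2 y3 y4 z1 z2 : ℝ) :
    integrandI p t x1 x2 x3 x4 y1 y2 y3 y4 z1 z2 ≤
      𝕀 (2 * t) x1 y1 * 𝕀 (2 * t) x2 y2 * (𝕀 t x3 y3 * |y1 - y3| ^ p) *
        (𝕀 t x4 y4 * |y2 - y4| ^ p) * 𝕀 t x1 z1 * (𝕀 t x2 z2 * |z1 - z2| ^ p) := by
  calc _ = 𝕀 t x3 y3 * 𝕀 t x4 y4 * (|y1 - y3| ^ p * |y2 - y4| ^ p * |z1 - z2| ^ p) *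
        (𝕀 t x1 z1 * 𝕀 t y1 z1) * (𝕀 t x2 z2 * 𝕀 t y2 z2) := by ring
    _ ≤ 𝕀 t x3 y3 * 𝕀 t x4 y4 * (|y1 - y3| ^ p * |y2 - y4| ^ p * |z1 - z2| ^ p) *
        (𝕀 (2 * t) x1 y1 * 𝕀 t x1 z1) * (𝕀 (2 * t) x2 y2 * 𝕀 t x2 z2) := by
      gcongr _ * ?_ * ?_ <;> exact window_mul_window_le (by linarith)
    _ = _ := by ring

lemma integral_z2_le (hp : -1 < p) (ht : 0 ≤ t) (y1 y2 y3 y4 z1 : ℝ) :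
    ∫ z2, integrandI p t x1 x2 x3 x4 y1 y2 y3 y4 z1 z2 ≤
      𝕀 (2 * t) x1 y1 * 𝕀 (2 * t) x2 y2 * (𝕀 t x3 y3 * |y1 - y3| ^ p) *
        (𝕀 t x4 y4 * |y2 - y4| ^ p) * (𝕀 t x1 z1 * windowMass p t (z1 - x2)) := by
  rw [← integral_window_mul_abs_rpow ht x2 z1, ← mul_assoc]
  exact integral_le_mul_integral _ (fun _ => by positivity)
    (integrable_window_mul_abs_rpow hp ht x2 z1) (integrandI_le x1 x2 x3 x4 y1 y2 y3 y4 z1)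

lemma integral_z1_le (hp : -1 < p) (ht : 0 ≤ t) (y1 y2 y3 y4 : ℝ) :
    ∫ z1, ∫ z2, integrandI p t x1 x2 x3 x4 y1 y2 y3 y4 z1 z2 ≤
      𝕀 (2 * t) x1 y1 * 𝕀 (2 * t) x2 y2 * (𝕀 t x3 y3 * |y1 - y3| ^ p) *
        (𝕀 t x4 y4 * |y2 - y4| ^ p) * windowMass p (2 * t) (x1 - x2) * (2 * t) := by
  calc _ ≤ 𝕀 (2 * t) x1 y1 * 𝕀 (2 * t) x2 y2 * (𝕀 t x3 y3 * |y1 - y3| ^ p) *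
          (𝕀 t x4 y4 * |y2 - y4| ^ p) * windowMass p (2 * t) (x1 - x2) * ∫ z1, 𝕀 t x1 z1 :=
        integral_le_mul_integral _ (fun _ => by positivity) (integrable_window ht x1)
          fun z1 => (integral_z2_le x1 x2 x3 x4 hp ht y1 y2 y3 y4 z1).trans <|
            (mul_le_mul_of_nonneg_left (window_mul_windowMass_le (s' := 2 * t) hp ht (by linarith))
              (by positivity)).trans_eq (by ring)
    _ = _ := by rw [integral_window ht]

lemma integral_y4_le (hp : -1 < p) (ht : 0 ≤ t) (y1 y2 y3 : ℝ) :
    ∫ y4, ∫ z1, ∫ z2, integrandI p t x1 x2 x3 x4 y1 y2 y3 y4 z1 z2 ≤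
      𝕀 (2 * t) x1 y1 * (𝕀 t x3 y3 * |y1 - y3| ^ p) * (2 * t * windowMass p (2 * t) (x1 - x2)) *
        (𝕀 (2 * t) x2 y2 * windowMass p (3 * t) (x2 - x4)) := by
  have := windowMass_nonneg (p := p) (by linarith : 0 ≤ 2 * t) (x1 - x2)
  calc _ ≤ 𝕀 (2 * t) x1 y1 * (𝕀 t x3 y3 * |y1 - y3| ^ p) *
          (2 * t * windowMass p (2 * t) (x1 - x2)) * 𝕀 (2 * t) x2 y2 *
          ∫ y4, 𝕀 t x4 y4 * |y2 - y4| ^ p :=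
        integral_le_mul_integral _ (fun _ => by positivity)
          (integrable_window_mul_abs_rpow hp ht x4 y2)
          fun y4 => (integral_z1_le x1 x2 x3 x4 hp ht y1 y2 y3 y4).trans_eq (by ring)
    _ ≤ _ := by
      rw [integral_window_mul_abs_rpow ht, mul_assoc]
      exact mul_le_mul_of_nonneg_left (window_mul_windowMass_le hp ht (by linarith))
        (by positivity)

lemma integral_y3_le (hp : -1 < p) (ht : 0 ≤ t) (y1 y2 : ℝ) :
    ∫ y3, ∫ y4, ∫ z1, ∫ z2, integrandI p t x1 x2 x3 x4 y1 y2 y3 y4 z1 z2 ≤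
      2 * t * windowMass p (2 * t) (x1 - x2) * (𝕀 (2 * t) x2 y2 * windowMass p (3 * t) (x2 - x4)) *
        (𝕀 (2 * t) x1 y1 * windowMass p (3 * t) (x1 - x3)) := by
  have := windowMass_nonneg (p := p) (by linarith : 0 ≤ 2 * t) (x1 - x2)
  have := windowMass_nonneg (p := p) (by linarith : 0 ≤ 3 * t) (x2 - x4)
  calc _ ≤ 2 * t * windowMass p (2 * t) (x1 - x2) *
          (𝕀 (2 * t) x2 y2 * windowMass p (3 * t) (x2 - x4)) * 𝕀 (2 * t) x1 y1 *
          ∫ y3, 𝕀 t x3 y3 * |y1 - y3| ^ p :=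
        integral_le_mul_integral _ (fun _ => by positivity)
          (integrable_window_mul_abs_rpow hp ht x3 y1)
          fun y3 => (integral_y4_le x1 x2 x3 x4 hp ht y1 y2 y3).trans_eq (by ring)
    _ ≤ _ := by
      rw [integral_window_mul_abs_rpow ht, mul_assoc]
      exact mul_le_mul_of_nonneg_left (window_mul_windowMass_le hp ht (by linarith))
        (by positivity)

lemma integral_y2_le (hp : -1 < p) (ht : 0 ≤ t) (y1 : ℝ) :
    ∫ y2, ∫ y3, ∫ y4, ∫ z1, ∫ z2, integrandI p t x1 x2 x3 x4 y1 y2 y3 y4 z1 z2 ≤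
      2 * t * windowMass p (2 * t) (x1 - x2) * windowMass p (3 * t) (x2 - x4) *
        (𝕀 (2 * t) x1 y1 * windowMass p (3 * t) (x1 - x3)) * (2 * (2 * t)) := by
  rw [← integral_window (by linarith : 0 ≤ 2 * t) x2]
  exact integral_le_mul_integral _ (fun _ => by positivity) (integrable_window (by linarith) x2)
    fun y2 => (integral_y3_le x1 x2 x3 x4 hp ht y1 y2).trans_eq (by ring)

lemma integral_y1_le (hp : -1 < p) (ht : 0 ≤ t) :
    ∫ y1, ∫ y2, ∫ y3, ∫ y4, ∫ z1, ∫ z2, integrandI p t x1 x2 x3 x4 y1 y2 y3 y4 z1 z2 ≤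
      32 * t ^ 3 * windowMass p (2 * t) (x1 - x2) * windowMass p (3 * t) (x1 - x3) *
        windowMass p (3 * t) (x2 - x4) := by
  calc _ ≤ 2 * t * windowMass p (2 * t) (x1 - x2) * windowMass p (3 * t) (x2 - x4) *
          windowMass p (3 * t) (x1 - x3) * (2 * (2 * t)) * ∫ y1, 𝕀 (2 * t) x1 y1 :=
        integral_le_mul_integral _ (fun _ => by positivity) (integrable_window (by linarith) x1)
          fun y1 => (integral_y2_le x1 x2 x3 x4 hp ht y1).trans_eq (by ring)
    _ = _ := by rw [integral_window (by linarith)]; ring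

end InnerIntegral

lemma intervalIntegral_mono_of_nonneg {F G : ℝ → ℝ} {a b : ℝ} (hab : a ≤ b)
    (hF0 : ∀ v, 0 ≤ F v) (hG : IntervalIntegrable G volume a b) (hFG : ∀ v ∈ Icc a b, F v ≤ G v) :
    ∫ v in a..b, F v ≤ ∫ v in a..b, G v := by
  rw [integral_of_le hab, integral_of_le hab]
  exact integral_mono_of_nonneg (ae_of_all _ hF0) hG.1
    (ae_restrict_of_forall_mem measurableSet_Ioc fun v hv => hFG v (Ioc_subset_Icc_self hv))

lemma intervalIntegral_le_mul_of_le {F g : ℝ → ℝ} {a b c x M : ℝ} (hab : a ≤ b) (hc : 0 ≤ c)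
    (hg : Continuous g) (hF0 : ∀ v, 0 ≤ F v) (hF : ∀ v ∈ Icc a b, F v ≤ c * g (x - v))
    (hM : ∫ w in a..b, g (x - w) ≤ M) : ∫ v in a..b, F v ≤ c * M := by
  calc ∫ v in a..b, F v ≤ ∫ v in a..b, c * g (x - v) :=
        intervalIntegral_mono_of_nonneg hab hF0
          ((by fun_prop : Continuous fun v => c * g (x - v)).intervalIntegrable a b) hF
    _ ≤ c * M := by rw [intervalIntegral.integral_const_mul]; exact mul_le_mul_of_nonneg_left hM hc

lemma intervalIntegral_four_le {F : ℝ → ℝ → ℝ → ℝ → ℝ} {f g : ℝ → ℝ} {c R Mf Mg : ℝ}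
    (hR : 0 ≤ R) (hc : 0 ≤ c) (hf : Continuous f) (hg : Continuous g) (hf0 : ∀ u, 0 ≤ f u)
    (hg0 : ∀ u, 0 ≤ g u) (hMf : ∀ x, |x| ≤ R → ∫ w in (-R)..R, f (x - w) ≤ Mf)
    (hMg : ∀ x, |x| ≤ R → ∫ w in (-R)..R, g (x - w) ≤ Mg)
    (hF0 : ∀ x1 x2 x3 x4, 0 ≤ F x1 x2 x3 x4)
    (hF : ∀ x1 x2 x3 x4, F x1 x2 x3 x4 ≤ c * f (x1 - x2) * g (x1 - x3) * g (x2 - x4)) :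
    ∫ x1 in (-R)..R, ∫ x2 in (-R)..R, ∫ x3 in (-R)..R, ∫ x4 in (-R)..R, F x1 x2 x3 x4 ≤
      2 * R * (c * Mf * Mg * Mg) := by
  have hRR : -R ≤ R := by linarith
  have habs : ∀ v ∈ Icc (-R) R, |v| ≤ R := fun v hv => abs_le.mpr hv
  have hMg0 : 0 ≤ Mg :=
    (integral_nonneg hRR fun _ _ => hg0 _).trans (hMg 0 (by simpa using hR))
  have h4 : ∀ x1 x2 x3, |x2| ≤ R →
      ∫ x4 in (-R)..R, F x1 x2 x3 x4 ≤ c * f (x1 - x2) * g (x1 - x3) * Mg := fun x1 x2 x3 h2 =>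
    intervalIntegral_le_mul_of_le hRR (by have := hf0 (x1 - x2); have := hg0 (x1 - x3); positivity)
      hg (hF0 x1 x2 x3) (fun x4 _ => hF x1 x2 x3 x4) (hMg x2 h2)
  have h3 : ∀ x1 x2, |x1| ≤ R → |x2| ≤ R →
      ∫ x3 in (-R)..R, ∫ x4 in (-R)..R, F x1 x2 x3 x4 ≤ c * f (x1 - x2) * Mg * Mg :=
    fun x1 x2 h1 h2 =>
      intervalIntegral_le_mul_of_le hRR (by have := hf0 (x1 - x2); positivity) hg
        (fun x3 => integral_nonneg hRR fun x4 _ => hF0 x1 x2 x3 x4)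
        (fun x3 _ => (h4 x1 x2 x3 h2).trans_eq (by ring)) (hMg x1 h1)
  have h2 : ∀ x1, |x1| ≤ R →
      ∫ x2 in (-R)..R, ∫ x3 in (-R)..R, ∫ x4 in (-R)..R, F x1 x2 x3 x4 ≤ c * Mg * Mg * Mf :=
    fun x1 h1 =>
      intervalIntegral_le_mul_of_le hRR (by positivity) hf
        (fun x2 => integral_nonneg hRR fun x3 _ => integral_nonneg hRR fun x4 _ => hF0 x1 x2 x3 x4)
        (fun x2 hx2 => (h3 x1 x2 h1 (habs x2 hx2)).trans_eq (by ring)) (hMf x1 h1)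
  calc _ ≤ ∫ _ in (-R)..R, c * Mg * Mg * Mf :=
        intervalIntegral_mono_of_nonneg hRR
          (fun x1 => integral_nonneg hRR fun x2 _ => integral_nonneg hRR fun x3 _ =>
            integral_nonneg hRR fun x4 _ => hF0 x1 x2 x3 x4)
          intervalIntegrable_const fun x1 hx1 => h2 x1 (habs x1 hx1)
    _ = _ := by rw [intervalIntegral.integral_const, smul_eq_mul]; ring

end TenfoldIntegral

open TenfoldIntegral in
/-- The bound on the ten-fold integral `𝐈` from the proof of Theorem 1.1 (case
`H > 1/2`): for `H ∈ (1/2,1)` and `t > 0` there are `C > 0`, `R₀ > 0` such that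
for all `R ≥ R₀` the integral over `[-R,R]⁴ × ℝ⁶` of the product of indicators
and kernels is at most `C R^{6H-2}`. -/
theorem stmt_13 (H : ℝ) (hH : H ∈ Set.Ioo (1/2 : ℝ) 1) (t : ℝ) (ht : 0 < t) :
    ∃ C > (0:ℝ), ∃ R₀ > (0:ℝ), ∀ R ≥ R₀,
      (∫ x1 in (-R)..R, ∫ x2 in (-R)..R, ∫ x3 in (-R)..R, ∫ x4 in (-R)..R,
        ∫ y1 : ℝ, ∫ y2 : ℝ, ∫ y3 : ℝ, ∫ y4 : ℝ, ∫ z1 : ℝ, ∫ z2 : ℝ,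
          (if |x1 - z1| ≤ t then (1:ℝ) else 0) * (if |x2 - z2| ≤ t then (1:ℝ) else 0) *
          (if |x3 - y3| ≤ t then (1:ℝ) else 0) * (if |x4 - y4| ≤ t then (1:ℝ) else 0) *
          (if |y1 - z1| ≤ t then (1:ℝ) else 0) * (if |y2 - z2| ≤ t then (1:ℝ) else 0) *
          (|y1 - y3| ^ (2 * H - 2) * |y2 - y4| ^ (2 * H - 2) * |z1 - z2| ^ (2 * H - 2)))
        ≤ C * R ^ (6 * H - 2) := by
  obtain ⟨hH1, hH2⟩ := hH
  set p := 2 * H - 2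
  have hp : -1 < p := by linarith
  have he : 0 < p + 1 := by linarith
  refine ⟨64 * t ^ 3 * (8 * t * 3 ^ (p + 1) / (p + 1)) * (12 * t * 3 ^ (p + 1) / (p + 1)) ^ 2,
    by positivity, 3 * t, by positivity, fun R hR => ?_⟩
  have hR0 : 0 < R := by linarith
  have hpow : R ^ (6 * H - 2) = R * (R ^ (p + 1)) ^ 3 := by
    rw [← rpow_natCast, ← rpow_mul hR0.le, ← rpow_one_add' hR0.le (by positivity)]
    congr 1
    push_cast
    ring
  calc _ ≤ 2 * R * (32 * t ^ 3 * (4 * (2 * t) * ((3 * R) ^ (p + 1) / (p + 1))) *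
        (4 * (3 * t) * ((3 * R) ^ (p + 1) / (p + 1))) *
        (4 * (3 * t) * ((3 * R) ^ (p + 1) / (p + 1)))) :=
      intervalIntegral_four_le hR0.le (by positivity) (continuous_windowMass hp _)
        (continuous_windowMass hp _) (windowMass_nonneg (by linarith))
        (windowMass_nonneg (by linarith))
        (fun _ hx => integral_windowMass_sub_le hp (by linarith) (by linarith) hx)
        (fun _ hx => integral_windowMass_sub_le hp (by linarith) (by linarith) hx)
        (fun _ _ _ _ => by positivity) (fun x1 x2 x3 x4 => integral_y1_le x1 x2 x3 x4 hp ht.le)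
    _ = _ := by
      rw [mul_rpow (by norm_num) hR0.le, hpow]
      ring
end

section
/- Let t > 0, 0 ≤ s ≤ t and R > 0. Then ∫_{ℝ²} φ_{t−s,R}(y)²·φ_{t−s,R}(y')²·1_{{|y−y'| ≤ 2s}} dy dy' ≤ 8·s·(t−s)⁴·(R+t−s). -/
open MeasureTheory Real intervalIntegral

/-!
With `a = t - s`: since `φ_{a,R} ≤ a` and `φ_{a,R}` vanishes outside `[-(R+a), R+a]`, the inner integral over the
window `|y - y'| ≤ 2s` is at most `4s·a²`, and the outer one is then at most `2(R+a)·a²·4s·a²`.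
-/

open Metric Set

theorem integral_le_measureReal_mul {X : Type*} [MeasurableSpace X] {μ : Measure X}
    {f : X → ℝ} {s : Set X} {C : ℝ} (hs : MeasurableSet s) (hμs : μ s ≠ ⊤)
    (hf0 : ∀ x, 0 ≤ f x) (hfs : ∀ x ∈ s, f x ≤ C) (hf : ∀ x ∉ s, f x = 0) :
    ∫ x, f x ∂μ ≤ μ.real s * C := by
  have hle : ∀ x, f x ≤ s.indicator (fun _ => C) x := fun x => by
    by_cases hx : x ∈ s
    · simpa [hx] using hfs x hx
    · simp [hx, hf x hx]
  calc ∫ x, f x ∂μ ≤ ∫ x, s.indicator (fun _ => C) x ∂μ :=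
        integral_mono_of_nonneg (.of_forall hf0)
          ((integrable_indicator_iff hs).2 (integrableOn_const hμs)) (.of_forall hle)
    _ = μ.real s * C := by rw [integral_indicator_const C hs, smul_eq_mul]

theorem ite_abs_sub_le_eq_indicator_closedBall (a x y : ℝ) :
    (if |x - y| ≤ a then (1:ℝ) else 0) = (closedBall y a).indicator 1 x := by
  by_cases h : |x - y| ≤ a <;> simp [h, Real.dist_eq]

theorem phi_eq_half_volume_real (a : ℝ) {R : ℝ} (hR : 0 ≤ R) (y : ℝ) :
    phi a R y = 1 / 2 * volume.real (closedBall y a ∩ Ioc (-R) R) := by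
  simp only [phi, ite_abs_sub_le_eq_indicator_closedBall]
  rw [integral_of_le (by linarith), integral_indicator_one measurableSet_closedBall,
    measureReal_restrict_apply measurableSet_closedBall]

theorem phi_nonneg (a : ℝ) {R : ℝ} (hR : 0 ≤ R) (y : ℝ) : 0 ≤ phi a R y := by
  rw [phi_eq_half_volume_real a hR]
  positivity

theorem phi_le {a R : ℝ} (ha : 0 ≤ a) (hR : 0 ≤ R) (y : ℝ) : phi a R y ≤ a := by
  have := measureReal_mono (μ := volume) (inter_subset_left (s := closedBall y a) (t := Ioc (-R) R))
    measure_closedBall_lt_top.ne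
  rw [Real.volume_real_closedBall ha] at this
  rw [phi_eq_half_volume_real a hR]
  linarith

theorem phi_eq_zero_of_lt_abs {a R y : ℝ} (hR : 0 ≤ R) (hy : R + a < |y|) : phi a R y = 0 := by
  have hempty : closedBall y a ∩ Ioc (-R) R = ∅ := by
    refine eq_empty_of_forall_notMem fun x ⟨hxy, hxR⟩ => ?_
    rw [mem_closedBall, Real.dist_eq] at hxy
    have hx : |x| ≤ R := abs_le.2 ⟨hxR.1.le, hxR.2⟩
    have := abs_sub_abs_le_abs_sub y x
    rw [abs_sub_comm y x] at this
    linarith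
  simp [phi_eq_half_volume_real a hR, hempty]

theorem phi_sq_le {a R : ℝ} (ha : 0 ≤ a) (hR : 0 ≤ R) (y : ℝ) : phi a R y ^ 2 ≤ a ^ 2 :=
  pow_le_pow_left₀ (phi_nonneg a hR y) (phi_le ha hR y) 2

theorem integral_phi_sq_mul_ite_le {a R r : ℝ} (ha : 0 ≤ a) (hR : 0 ≤ R) (hr : 0 ≤ r) (y : ℝ) :
    ∫ y', phi a R y' ^ 2 * (if |y - y'| ≤ r then (1:ℝ) else 0) ≤ 2 * r * a ^ 2 := by
  rw [← Real.volume_real_closedBall (a := y) hr]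
  refine integral_le_measureReal_mul measurableSet_closedBall measure_closedBall_lt_top.ne
    (fun y' => by positivity) (fun y' hy' => ?_) (fun y' hy' => ?_)
  · rw [mem_closedBall, Real.dist_eq, abs_sub_comm] at hy'
    simpa [hy'] using phi_sq_le ha hR y'
  · rw [mem_closedBall, Real.dist_eq, abs_sub_comm] at hy'
    simp [hy']

theorem stmt_14_general (t s R : ℝ) (hs0 : 0 ≤ s) (hst : s ≤ t) (hR : 0 < R) :
    (∫ y : ℝ, ∫ y' : ℝ,
        (phi (t - s) R y) ^ 2 * (phi (t - s) R y') ^ 2 *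
          (if |y - y'| ≤ 2 * s then (1:ℝ) else 0))
      ≤ 8 * s * (t - s) ^ 4 * (R + t - s) := by
  set a := t - s
  have ha : 0 ≤ a := sub_nonneg.2 hst
  have hinner := integral_phi_sq_mul_ite_le ha hR.le (by positivity : 0 ≤ 2 * s)
  calc (∫ y, ∫ y', phi a R y ^ 2 * phi a R y' ^ 2 * (if |y - y'| ≤ 2 * s then (1:ℝ) else 0))
      = ∫ y, phi a R y ^ 2 * ∫ y', phi a R y' ^ 2 * (if |y - y'| ≤ 2 * s then (1:ℝ) else 0) := by
        simp only [mul_assoc, MeasureTheory.integral_const_mul]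
    _ ≤ volume.real (closedBall (0:ℝ) (R + a)) * (a ^ 2 * (2 * (2 * s) * a ^ 2)) := by
        refine integral_le_measureReal_mul measurableSet_closedBall measure_closedBall_lt_top.ne
          (fun y => mul_nonneg (sq_nonneg _) (integral_nonneg fun y' => by positivity))
          (fun y _ => mul_le_mul (phi_sq_le ha hR.le y) (hinner y)
            (integral_nonneg fun y' => by positivity) (sq_nonneg a))
          (fun y hy => ?_)
        rw [mem_closedBall, dist_zero_right, Real.norm_eq_abs, not_le] at hy
        simp [phi_eq_zero_of_lt_abs hR.le hy]
    _ = 8 * s * a ^ 4 * (R + t - s) := by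
        rw [Real.volume_real_closedBall (by linarith)]
        ring

/-- For `t > 0`, `0 ≤ s ≤ t` and `R > 0`:
`∬ φ_{t-s,R}(y)² φ_{t-s,R}(y')² 1_{|y-y'| ≤ 2s} dy dy' ≤ 8 s (t-s)⁴ (R+t-s)`. -/
theorem stmt_14 (t s R : ℝ) (ht : 0 < t) (hs0 : 0 ≤ s) (hst : s ≤ t) (hR : 0 < R) :
    (∫ y : ℝ, ∫ y' : ℝ,
        (phi (t - s) R y) ^ 2 * (phi (t - s) R y') ^ 2 *
          (if |y - y'| ≤ 2 * s then (1:ℝ) else 0))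
      ≤ 8 * s * (t - s) ^ 4 * (R + t - s) :=
  stmt_14_general t s R hs0 hst hR
end
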